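/- Let p > 2 and let (w_m)_{m∈ℕ} be a sequence in (0,1] with w_m → 0. For each n ∈ ℕ let Y_n be the corresponding space on (ℕ×ℕ)^n with norm given by the family 𝒫_n = {(P_I, W_I) : I ⊆ {1,…,n}}, and let |||·||| be the envelope norm generated by 𝒫_n. Then sup{ |||x||| / ‖x‖_{Y_n} : x ∈ Y_n, x ≠ 0 } ≥ n^{1/p}. -/

import Mathlib

/-!
Take an index `m` with `v = w_m` small and a large `N`. For each `k < n` let `A_k` be a set of
`N` points of `(ℕ×ℕ)^n`, all of whose coordinates have weight `v`, differing only in their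
`k`-th coordinate, and let `x` be the constant `(N v²)^{-1/2}` on `⋃ A_k`. For `I ≠ ∅` distinct
`A_k` lie in distinct blocks of `P_I`; the set `A_k` is cut into singletons when `k ∈ I`,
contributing `N (N v²)^{-p/2}` (small for large `N`), and lies in one block when `k ∉ I`,
contributing `v^{p(|Iᶜ|-1)}`, which is `1` if `Iᶜ = {k}` and small otherwise. For `I = ∅` the
single block contributes `(n v^{2(n-1)})^{p/2} ≤ 1`. Hence `‖x‖_{Y_n}^p ≤ 1 + ε`. The envelope
norm, on the other hand, may use `P_{{k}ᶜ}` on `A_k` for all `k` at once, so `|||x|||^p ≥ n`.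
-/

open scoped ENNReal
open MeasureTheory Filter

noncomputable section

variable {α : Type*}

/-- `P` is a partition of the type `α`: a collection of pairwise disjoint
nonempty subsets of `α` whose union is all of `α`. -/
def IsPartition (P : Set (Set α)) : Prop :=
  (∀ N ∈ P, N.Nonempty) ∧ P.PairwiseDisjoint id ∧ ⋃₀ P = Set.univ

/-- A weight function takes values in `(0,1]`. -/
def IsWeight (W : α → ℝ) : Prop := ∀ a, W a ∈ Set.Ioc (0 : ℝ) 1

/-- `‖x‖_{P,W} = (Σ_{N∈P} (Σ_{j∈N} x_j² w_j²)^{p/2})^{1/p}`, valued in `[0,∞]`. -/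
def pwNorm (p : ℝ) (P : Set (Set α)) (W : α → ℝ) (x : α → ℝ) : ℝ≥0∞ :=
  (∑' N : P, (∑' j : N.1, ENNReal.ofReal ((x j.1) ^ 2 * (W j.1) ^ 2)) ^ (p / 2)) ^ (1 / p)

/-- A partition–weight pair on `α`. -/
abbrev PWPair (α : Type*) := Set (Set α) × (α → ℝ)

/-- Every member of the family is a genuine partition–weight pair. -/
def IsPWFamily (𝒞 : Set (PWPair α)) : Prop :=
  ∀ PW ∈ 𝒞, IsPartition PW.1 ∧ IsWeight PW.2

/-- `‖x‖_𝒞 = sup_{(P,W) ∈ 𝒞} ‖x‖_{P,W}`. -/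
def famNorm (p : ℝ) (𝒞 : Set (PWPair α)) (x : α → ℝ) : ℝ≥0∞ :=
  ⨆ PW ∈ 𝒞, pwNorm p PW.1 PW.2 x

/-- The block of the partition `Q` containing `b` (for a genuine partition this is
the unique element of `Q` containing `b`). -/
def blockOf (Q : Set (Set α)) (b : α) : Set α := ⋃₀ {q ∈ Q | b ∈ q}

/-- The partition `P(Q,T)` obtained from a partition `Q` and a choice `T` of a
partition–weight pair for each block of `Q`. -/
def envPartition (Q : Set (Set α)) (T : Set α → PWPair α) : Set (Set α) :=
  {K | K.Nonempty ∧ ∃ q ∈ Q, ∃ s ∈ (T q).1, K = q ∩ s}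

/-- The weight `W(Q,T)`: on the block `q` of `Q` it is the weight chosen by `T q`. -/
def envWeight (Q : Set (Set α)) (T : Set α → PWPair α) : α → ℝ :=
  fun b => (T (blockOf Q b)).2 b

/-- A family of partition–weight pairs satisfies the envelope property if it is
closed under the operation `(Q, T) ↦ (P(Q,T), W(Q,T))`. -/
def EnvelopeProp (𝒞 : Set (PWPair α)) : Prop :=
  ∀ Q : Set (Set α), IsPartition Q → ∀ T : Set α → PWPair α, (∀ q ∈ Q, T q ∈ 𝒞) →
    (envPartition Q T, envWeight Q T) ∈ 𝒞

/-- The family `𝒞̃` of all pairs `(P(Q,T), W(Q,T))`. -/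
def envFam (𝒞 : Set (PWPair α)) : Set (PWPair α) :=
  {PW | ∃ Q T, IsPartition Q ∧ (∀ q ∈ Q, T q ∈ 𝒞) ∧
    PW = (envPartition Q T, envWeight Q T)}

/-- The envelope norm generated by `𝒞`. -/
def envNorm (p : ℝ) (𝒞 : Set (PWPair α)) (x : α → ℝ) : ℝ≥0∞ := famNorm p (envFam 𝒞) x

/-- The index set `(ℕ×ℕ)^n`. -/
abbrev BIdx (n : ℕ) := Fin n → ℕ × ℕ

/-- The partition `P_I` of `(ℕ×ℕ)^n` into the sets obtained by fixing the coordinates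
`i_k` for `k ∈ I` and letting the others range over all of `ℕ × ℕ`. -/
def PI {n : ℕ} (I : Finset (Fin n)) : Set (Set (BIdx n)) :=
  {S | ∃ g : Fin n → ℕ × ℕ, S = {i : BIdx n | ∀ k ∈ I, i k = g k}}

/-- The weight `W_I(i) = Π_{k∉I} w_{i_k}`, where `w_{(m,l)} = w_m`. -/
def WI (w : ℕ → ℝ) {n : ℕ} (I : Finset (Fin n)) : BIdx n → ℝ :=
  fun i => ∏ k ∈ Iᶜ, w (i k).1

/-- The family of partition–weight pairs `{(P_I, W_I) : I ⊆ {1,…,n}}` defining `Y_n`. -/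
def famYn (w : ℕ → ℝ) (n : ℕ) : Set (PWPair (BIdx n)) :=
  Set.range fun I : Finset (Fin n) => (PI I, WI w I)

/-- The norm of `Y_n`:  `max_{I ⊆ {1,…,n}} ‖x‖_{P_I,W_I}`. -/
def Ynorm (p : ℝ) (w : ℕ → ℝ) (n : ℕ) (x : BIdx n → ℝ) : ℝ≥0∞ :=
  famNorm p (famYn w n) x

open Topology

def blockPowSum (q : ℝ) (P : Set (Set α)) (g : α → ℝ≥0∞) : ℝ≥0∞ :=
  ∑' N : P, (∑' j : N.1, g j) ^ q

theorem pwNorm_eq_blockPowSum (p : ℝ) (P : Set (Set α)) (W x : α → ℝ) :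
    pwNorm p P W x =
      blockPowSum (p / 2) P (fun j => ENNReal.ofReal (x j ^ 2 * W j ^ 2)) ^ (1 / p) :=
  rfl

section BlockPowSum

variable {q : ℝ} {P : Set (Set α)}

theorem tsum_rpow_of_support_subsingleton {β : Type*} {f : β → ℝ≥0∞} (hq : 0 < q)
    (hf : (Function.support f).Subsingleton) : (∑' j, f j) ^ q = ∑' j, f j ^ q := by
  rcases hf.eq_empty_or_singleton with h | ⟨j₀, h⟩
  · rw [Function.support_eq_empty_iff] at h
    simp [h, ENNReal.zero_rpow_of_pos hq]
  · have hf0 : ∀ j ≠ j₀, f j = 0 := fun j hj =>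
      Function.notMem_support.1 (by rw [h]; exact hj)
    rw [tsum_eq_single j₀ hf0,
      tsum_eq_single j₀ fun j hj => by rw [hf0 j hj, ENNReal.zero_rpow_of_pos hq]]

theorem blockPowSum_eq_of_support_subset (hP : P.PairwiseDisjoint id) (hq : 0 < q)
    {g : α → ℝ≥0∞} {N₀ : Set α} (hN₀ : N₀ ∈ P) (hg : Function.support g ⊆ N₀) :
    blockPowSum q P g = (∑' j, g j) ^ q := by
  rw [blockPowSum, tsum_eq_single ⟨N₀, hN₀⟩, tsum_subtype_eq_of_support_subset hg]
  rintro ⟨N, hN⟩ hne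
  have hdisj : Disjoint N N₀ := hP hN hN₀ fun h => hne (Subtype.ext h)
  have hzero : ∑' j : N, g j = 0 :=
    ENNReal.tsum_eq_zero.2 fun j => Function.notMem_support.1 fun h =>
      Set.disjoint_left.1 hdisj j.2 (hg h)
  rw [hzero, ENNReal.zero_rpow_of_pos hq]

theorem blockPowSum_le_tsum_rpow (hP : P.PairwiseDisjoint id) (hq : 0 < q) {g : α → ℝ≥0∞}
    (hg : ∀ N ∈ P, (N ∩ Function.support g).Subsingleton) :
    blockPowSum q P g ≤ ∑' j, g j ^ q := by
  have hinj : Function.Injective fun σ : Σ N : P, N.1 => σ.2.1 := by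
    rintro ⟨⟨N, hN⟩, ⟨j, hj⟩⟩ ⟨⟨N', hN'⟩, ⟨j', hj'⟩⟩ (rfl : j = j')
    obtain rfl : N = N' := hP.elim hN hN' (Set.not_disjoint_iff.2 ⟨j, hj, hj'⟩)
    rfl
  calc blockPowSum q P g = ∑' N : P, ∑' j : N.1, g j ^ q :=
        tsum_congr fun N => tsum_rpow_of_support_subsingleton hq fun j hj j' hj' =>
          Subtype.ext (hg N N.2 ⟨j.2, hj⟩ ⟨j'.2, hj'⟩)
    _ = ∑' σ : Σ N : P, N.1, g σ.2 ^ q :=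
        (ENNReal.tsum_sigma' (β := fun N : P => N.1) fun σ => g σ.2 ^ q).symm
    _ ≤ ∑' j, g j ^ q := ENNReal.tsum_comp_le_tsum_of_injective hinj _

theorem blockPowSum_sum {ι : Type*} [Fintype ι] (hq : 0 < q) (g : ι → α → ℝ≥0∞)
    (hsep : ∀ N ∈ P, ∀ k k', (N ∩ Function.support (g k)).Nonempty →
      (N ∩ Function.support (g k')).Nonempty → k = k') :
    blockPowSum q P (∑ k, g k) = ∑ k, blockPowSum q P (g k) := by
  simp only [blockPowSum, Finset.sum_apply]
  rw [← Summable.tsum_finsetSum fun _ _ => ENNReal.summable]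
  refine tsum_congr fun N => ?_
  rw [Summable.tsum_finsetSum fun _ _ => ENNReal.summable,
    ← tsum_fintype (L := SummationFilter.unconditional ι),
    ← tsum_fintype (L := SummationFilter.unconditional ι), tsum_rpow_of_support_subsingleton hq]
  intro k hk k' hk'
  obtain ⟨j, hj⟩ := not_forall.1 (ENNReal.tsum_eq_zero.not.1 hk)
  obtain ⟨j', hj'⟩ := not_forall.1 (ENNReal.tsum_eq_zero.not.1 hk')
  exact hsep N N.2 k k' ⟨j, j.2, hj⟩ ⟨j', j'.2, hj'⟩

theorem sum_le_blockPowSum {ι : Type*} [Fintype ι] {A : ι → Set α} (hA : Function.Injective A)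
    (hAP : ∀ k, A k ∈ P) (g : α → ℝ≥0∞) :
    ∑ k, (∑' j : A k, g j) ^ q ≤ blockPowSum q P g := by
  rw [← tsum_fintype (L := SummationFilter.unconditional ι)]
  exact ENNReal.tsum_comp_le_tsum_of_injective (f := fun k => (⟨A k, hAP k⟩ : P))
    (fun k k' h => hA (congrArg Subtype.val h)) (fun N => (∑' j : N.1, g j) ^ q)

end BlockPowSum

theorem blockOf_eq {Q : Set (Set α)} (hQ : Q.PairwiseDisjoint id) {q : Set α} (hq : q ∈ Q)
    {b : α} (hb : b ∈ q) : blockOf Q b = q := by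
  have : {q' | q' ∈ Q ∧ b ∈ q'} = {q} := by
    ext q'
    refine ⟨fun ⟨hq', hbq'⟩ => hQ.elim hq' hq (Set.not_disjoint_iff.2 ⟨b, hbq', hb⟩),
      fun h => h ▸ ⟨hq, hb⟩⟩
  rw [blockOf, this, Set.sUnion_singleton]

theorem isPartition_insert_compl_iUnion {ι : Type*} {A : ι → Set α}
    (hA : Pairwise fun k k' => Disjoint (A k) (A k')) (hne : ∀ k, (A k).Nonempty)
    (hc : (⋃ k, A k)ᶜ.Nonempty) :
    IsPartition (insert (⋃ k, A k)ᶜ (Set.range A)) := by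
  refine ⟨?_, ?_, ?_⟩
  · rintro _ (rfl | ⟨k, rfl⟩)
    exacts [hc, hne k]
  · refine (hA.range_pairwise).insert fun _ ⟨k, hk⟩ _ => hk ▸ ?_
    have h : Disjoint (⋃ k, A k)ᶜ (A k) :=
      Set.disjoint_compl_left_iff_subset.2 (Set.subset_iUnion A k)
    exact ⟨h, h.symm⟩
  · rw [Set.sUnion_insert, Set.sUnion_range, Set.compl_union_self]

section Cells

variable {n : ℕ}

theorem PI_pairwiseDisjoint (I : Finset (Fin n)) : (PI I).PairwiseDisjoint id := by
  rintro _ ⟨g, rfl⟩ _ ⟨g', rfl⟩ hne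
  refine Set.disjoint_left.2 fun i hi hi' => hne ?_
  ext j
  exact forall₂_congr fun k hk => by rw [← hi k hk, ← hi' k hk]

theorem apply_eq_of_mem_PI {I : Finset (Fin n)} {N : Set (BIdx n)} (hN : N ∈ PI I) {k : Fin n}
    (hk : k ∈ I) {i i' : BIdx n} (hi : i ∈ N) (hi' : i' ∈ N) : i k = i' k := by
  obtain ⟨g, rfl⟩ := hN
  exact (hi k hk).trans (hi' k hk).symm

theorem univ_mem_PI_empty : (Set.univ : Set (BIdx n)) ∈ PI ∅ :=
  ⟨fun _ => (0, 0), by simp⟩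

/-- Every coordinate of `cell m k l` records `k`, so a single coordinate tells the blocks
`cellBlock m N k` apart; the `k`-th coordinate also records `l`. -/
def cell (m : ℕ) (k : Fin n) (l : ℕ) : BIdx n :=
  fun j => (m, Nat.pair k (if j = k then l + 1 else 0))

def cellBlock (m N : ℕ) (k : Fin n) : Finset (BIdx n) :=
  (Finset.range N).image (cell m k)

variable {m N : ℕ} {k : Fin n} {i : BIdx n}

theorem cell_injective (m : ℕ) (k : Fin n) : Function.Injective (cell m k) := by
  intro l l' h
  simpa [cell] using congrArg (fun i : BIdx n => (Nat.unpair (i k).2).2) h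

theorem mem_cellBlock : i ∈ cellBlock m N k ↔ ∃ l < N, cell m k l = i := by
  simp [cellBlock]

theorem card_cellBlock (m N : ℕ) (k : Fin n) : (cellBlock m N k).card = N := by
  rw [cellBlock, Finset.card_image_of_injective _ (cell_injective m k), Finset.card_range]

theorem cell_mem_cellBlock (hN : 0 < N) (k : Fin n) : cell m k 0 ∈ cellBlock m N k :=
  mem_cellBlock.2 ⟨0, hN, rfl⟩

theorem fst_of_mem_cellBlock (hi : i ∈ cellBlock m N k) (j : Fin n) : (i j).1 = m := by
  obtain ⟨l, -, rfl⟩ := mem_cellBlock.1 hi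
  rfl

theorem eq_of_mem_cellBlock_of_apply_eq {k' : Fin n} {i' : BIdx n} (hi : i ∈ cellBlock m N k)
    (hi' : i' ∈ cellBlock m N k') {j : Fin n} (h : i j = i' j) : k = k' := by
  obtain ⟨l, -, rfl⟩ := mem_cellBlock.1 hi
  obtain ⟨l', -, rfl⟩ := mem_cellBlock.1 hi'
  exact Fin.ext (by simpa [cell] using congrArg (fun x : ℕ × ℕ => (Nat.unpair x.2).1) h)

theorem pairwise_disjoint_cellBlock (m N : ℕ) :
    Pairwise fun k k' : Fin n => Disjoint (cellBlock m N k : Set (BIdx n)) (cellBlock m N k') :=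
  fun k _ hkk' => Set.disjoint_left.2 fun _ hi hi' =>
    hkk' (eq_of_mem_cellBlock_of_apply_eq hi hi' (j := k) rfl)

theorem cellBlock_injective (hN : 0 < N) :
    Function.Injective fun k : Fin n => (cellBlock m N k : Set (BIdx n)) := by
  intro k k' h
  have h' : (cellBlock m N k : Set (BIdx n)) = cellBlock m N k' := h
  have hk : cell m k 0 ∈ (cellBlock m N k' : Set (BIdx n)) := h' ▸ cell_mem_cellBlock hN k
  exact eq_of_mem_cellBlock_of_apply_eq (cell_mem_cellBlock hN k) hk (j := k) rfl

theorem cellBlock_subset_of_notMem {I : Finset (Fin n)} (hk : k ∉ I) :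
    (cellBlock m N k : Set (BIdx n)) ⊆ {i | ∀ j ∈ I, i j = cell m k 0 j} := by
  intro i hi j hj
  obtain ⟨l, -, rfl⟩ := mem_cellBlock.1 hi
  simp [cell, ne_of_mem_of_not_mem hj hk]

theorem inter_cellBlock_subsingleton {I : Finset (Fin n)} {S : Set (BIdx n)} (hS : S ∈ PI I)
    (hk : k ∈ I) : (S ∩ cellBlock m N k).Subsingleton := by
  rintro _ ⟨h, hi⟩ _ ⟨h', hi'⟩
  obtain ⟨l, -, rfl⟩ := mem_cellBlock.1 hi
  obtain ⟨l', -, rfl⟩ := mem_cellBlock.1 hi'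
  have := congrArg (fun x : ℕ × ℕ => (Nat.unpair x.2).2) (apply_eq_of_mem_PI hS hk h h')
  simp only [cell, if_pos, Nat.unpair_pair] at this
  rw [Nat.succ_injective this]

theorem WI_of_mem_cellBlock (w : ℕ → ℝ) (I : Finset (Fin n)) (hi : i ∈ cellBlock m N k) :
    WI w I i = w m ^ Iᶜ.card := by
  rw [WI, Finset.prod_congr rfl fun j _ => by rw [fst_of_mem_cellBlock hi j], Finset.prod_const]

end Cells

section TestVector

variable {n : ℕ} {m N : ℕ} {q : ℝ}

theorem tsum_indicator_cellBlock (γ : ℝ≥0∞) (k : Fin n) :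
    ∑' j, (cellBlock m N k : Set (BIdx n)).indicator (fun _ => γ) j = N * γ := by
  rw [← tsum_subtype, Finset.tsum_subtype' (cellBlock m N k) fun _ => γ, Finset.sum_const,
    card_cellBlock, nsmul_eq_mul]

theorem blockPowSum_PI_indicator_cellBlock_le (hq : 0 < q) {I : Finset (Fin n)} {k : Fin n}
    (hk : k ∈ I) (γ : ℝ≥0∞) :
    blockPowSum q (PI I) ((cellBlock m N k : Set (BIdx n)).indicator fun _ => γ) ≤
      N * γ ^ q := by
  refine (blockPowSum_le_tsum_rpow (PI_pairwiseDisjoint I) hq fun S hS =>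
    (inter_cellBlock_subsingleton hS hk).anti
      (Set.inter_subset_inter_right _ Set.support_indicator_subset)).trans_eq ?_
  rw [← tsum_indicator_cellBlock (m := m) (γ ^ q) k]
  refine tsum_congr fun j => ?_
  by_cases hj : j ∈ (cellBlock m N k : Set (BIdx n))
  · simp [hj]
  · simp [hj, ENNReal.zero_rpow_of_pos hq]

theorem blockPowSum_PI_indicator_cellBlock_of_notMem (hq : 0 < q) {I : Finset (Fin n)}
    {k : Fin n} (hk : k ∉ I) (γ : ℝ≥0∞) :
    blockPowSum q (PI I) ((cellBlock m N k : Set (BIdx n)).indicator fun _ => γ) =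
      (N * γ) ^ q := by
  rw [blockPowSum_eq_of_support_subset (PI_pairwiseDisjoint I) hq ⟨cell m k 0, rfl⟩
    (Set.support_indicator_subset.trans (cellBlock_subset_of_notMem hk)),
    tsum_indicator_cellBlock]

theorem blockPowSum_PI_sum_indicator_cellBlock (hq : 0 < q) {I : Finset (Fin n)}
    (hI : I.Nonempty) (γ : ℝ≥0∞) :
    blockPowSum q (PI I) (∑ k : Fin n, (cellBlock m N k : Set (BIdx n)).indicator fun _ => γ) =
      ∑ k : Fin n,
        blockPowSum q (PI I) ((cellBlock m N k : Set (BIdx n)).indicator fun _ => γ) := by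
  obtain ⟨k₀, hk₀⟩ := hI
  refine blockPowSum_sum hq _ fun S hS k k' ⟨i, hiS, hi⟩ ⟨i', hi'S, hi'⟩ => ?_
  exact eq_of_mem_cellBlock_of_apply_eq (Set.support_indicator_subset hi)
    (Set.support_indicator_subset hi') (apply_eq_of_mem_PI hS hk₀ hiS hi'S)

theorem blockPowSum_PI_empty_sum_indicator_cellBlock (hq : 0 < q) (γ : ℝ≥0∞) :
    blockPowSum q (PI ∅) (∑ k : Fin n, (cellBlock m N k : Set (BIdx n)).indicator fun _ => γ) =
      (n * (N * γ)) ^ q := by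
  rw [blockPowSum_eq_of_support_subset (PI_pairwiseDisjoint ∅) hq univ_mem_PI_empty
    (Set.subset_univ _)]
  simp only [Finset.sum_apply]
  rw [Summable.tsum_finsetSum fun _ _ => ENNReal.summable]
  simp only [tsum_indicator_cellBlock, Finset.sum_const, Finset.card_univ, Fintype.card_fin,
    nsmul_eq_mul]

def testVec (w : ℕ → ℝ) (n m N : ℕ) : BIdx n → ℝ :=
  (⋃ k : Fin n, (cellBlock m N k : Set (BIdx n))).indicator fun _ => √((N * w m ^ 2)⁻¹)

theorem testVec_of_mem (w : ℕ → ℝ) {k : Fin n} {i : BIdx n} (hi : i ∈ cellBlock m N k) :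
    testVec w n m N i = √((N * w m ^ 2)⁻¹) :=
  Set.indicator_of_mem (Set.mem_iUnion.2 ⟨k, hi⟩) _

theorem testVec_ne_zero {w : ℕ → ℝ} (hw : IsWeight w) (hn : 0 < n) (hN : 0 < N) :
    testVec w n m N ≠ 0 := by
  have hk : cell m ⟨0, hn⟩ 0 ∈ cellBlock m N ⟨0, hn⟩ := cell_mem_cellBlock hN _
  have : 0 < testVec w n m N (cell m ⟨0, hn⟩ 0) := by
    rw [testVec_of_mem w hk]
    have := (hw m).1
    positivity
  exact fun h => this.ne' (congrFun h _)

theorem ofReal_testVec_sq_mul_sq (w : ℕ → ℝ) {W : BIdx n → ℝ} {c : ℝ}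
    (hW : ∀ k, ∀ i ∈ cellBlock m N k, W i = c) :
    (fun j => ENNReal.ofReal (testVec w n m N j ^ 2 * W j ^ 2)) =
      ∑ k : Fin n, (cellBlock m N k : Set (BIdx n)).indicator
        fun _ => ENNReal.ofReal ((N * w m ^ 2)⁻¹ * c ^ 2) := by
  funext j
  rw [Finset.sum_apply]
  by_cases hj : ∃ k, j ∈ cellBlock m N k
  · obtain ⟨k, hk⟩ := hj
    rw [Finset.sum_eq_single k (fun k' _ hk' => Set.indicator_of_notMem
        (fun h => hk' (eq_of_mem_cellBlock_of_apply_eq h hk (j := k) rfl)) _)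
        (by simp), Set.indicator_of_mem hk, testVec_of_mem w hk, hW k j hk,
      Real.sq_sqrt (by positivity)]
  · rw [not_exists] at hj
    simp [testVec, hj]

end TestVector

section Estimates

variable {n m N : ℕ} {w : ℕ → ℝ} {p D : ℝ}

theorem natCast_mul_ofReal_inv_mul_pow_sq (hN : 0 < N) {v : ℝ} (hv : v ≠ 0) {d : ℕ}
    (hd : 1 ≤ d) :
    (N : ℝ≥0∞) * ENNReal.ofReal ((N * v ^ 2)⁻¹ * (v ^ d) ^ 2) =
      ENNReal.ofReal ((v ^ 2) ^ (d - 1)) := by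
  rw [← ENNReal.ofReal_natCast, ← ENNReal.ofReal_mul (Nat.cast_nonneg _)]
  obtain ⟨e, rfl⟩ : ∃ e, d = e + 1 := ⟨d - 1, by omega⟩
  have : (N : ℝ) ≠ 0 := by positivity
  rw [Nat.add_sub_cancel]
  congr 1
  field_simp
  ring

theorem blockPowSum_PI_indicator_testVec_le (hp : 0 < p) (hw : IsWeight w) (hN : 0 < N)
    (hsD : (w m ^ 2) ^ (p / 2) ≤ D) (hND : N * ((N * w m ^ 2)⁻¹) ^ (p / 2) ≤ D)
    (I : Finset (Fin n)) (k : Fin n) :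
    blockPowSum (p / 2) (PI I) ((cellBlock m N k : Set (BIdx n)).indicator
        fun _ => ENNReal.ofReal ((N * w m ^ 2)⁻¹ * (w m ^ Iᶜ.card) ^ 2)) ≤
      (if Iᶜ = {k} then 1 else 0) + ENNReal.ofReal D := by
  have hq : 0 < p / 2 := by positivity
  obtain ⟨hw0, hw1⟩ := hw m
  by_cases hk : k ∈ I
  · have hne : Iᶜ ≠ {k} := fun h => Finset.mem_compl.1 (h ▸ Finset.mem_singleton_self k) hk
    rw [if_neg hne, zero_add]
    refine (blockPowSum_PI_indicator_cellBlock_le hq hk _).trans ?_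
    have hle : (N * w m ^ 2)⁻¹ * (w m ^ Iᶜ.card) ^ 2 ≤ (N * w m ^ 2)⁻¹ :=
      mul_le_of_le_one_right (by positivity) (pow_le_one₀ (by positivity)
        (pow_le_one₀ hw0.le hw1))
    calc (N : ℝ≥0∞) * ENNReal.ofReal ((N * w m ^ 2)⁻¹ * (w m ^ Iᶜ.card) ^ 2) ^ (p / 2)
        ≤ (N : ℝ≥0∞) * ENNReal.ofReal ((N * w m ^ 2)⁻¹) ^ (p / 2) := by gcongr
      _ = ENNReal.ofReal (N * ((N * w m ^ 2)⁻¹) ^ (p / 2)) := by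
        rw [ENNReal.ofReal_rpow_of_nonneg (by positivity) hq.le, ← ENNReal.ofReal_natCast,
          ← ENNReal.ofReal_mul (Nat.cast_nonneg _)]
      _ ≤ ENNReal.ofReal D := ENNReal.ofReal_le_ofReal hND
  · have hkc : k ∈ Iᶜ := Finset.mem_compl.2 hk
    have hd : 1 ≤ Iᶜ.card := Finset.card_pos.2 ⟨k, hkc⟩
    rw [blockPowSum_PI_indicator_cellBlock_of_notMem hq hk,
      natCast_mul_ofReal_inv_mul_pow_sq hN hw0.ne' hd,
      ENNReal.ofReal_rpow_of_nonneg (by positivity) hq.le]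
    by_cases hI : Iᶜ = {k}
    · simp [hI]
    · rw [if_neg hI, zero_add]
      have hd2 : 1 < Iᶜ.card := by
        simpa using Finset.card_lt_card (Finset.ssubset_iff_subset_ne.2
          ⟨Finset.singleton_subset_iff.2 hkc, Ne.symm hI⟩)
      refine ENNReal.ofReal_le_ofReal (le_trans ?_ hsD)
      gcongr
      exact pow_le_of_le_one (by positivity) (pow_le_one₀ hw0.le hw1) (by omega)

theorem blockPowSum_PI_testVec_le (hp : 0 < p) (hw : IsWeight w) (hn : 0 < n) (hN : 0 < N)
    (hn1 : n * w m ^ 2 ≤ 1) (hsD : (w m ^ 2) ^ (p / 2) ≤ D)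
    (hND : N * ((N * w m ^ 2)⁻¹) ^ (p / 2) ≤ D) (I : Finset (Fin n)) :
    blockPowSum (p / 2) (PI I)
        (fun j => ENNReal.ofReal (testVec w n m N j ^ 2 * WI w I j ^ 2)) ≤
      1 + n * ENNReal.ofReal D := by
  have hq : 0 < p / 2 := by positivity
  obtain ⟨hw0, hw1⟩ := hw m
  rw [ofReal_testVec_sq_mul_sq w fun k i hi => WI_of_mem_cellBlock w I hi]
  rcases I.eq_empty_or_nonempty with rfl | hI
  · have hc : (∅ : Finset (Fin n))ᶜ.card = n := by simp
    rw [blockPowSum_PI_empty_sum_indicator_cellBlock hq, hc,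
      natCast_mul_ofReal_inv_mul_pow_sq hN hw0.ne' hn, ← ENNReal.ofReal_natCast,
      ← ENNReal.ofReal_mul (Nat.cast_nonneg _)]
    refine le_add_right (ENNReal.rpow_le_one (ENNReal.ofReal_le_one.2 ?_) hq.le)
    rcases Nat.lt_or_ge n 2 with h | h
    · obtain rfl : n = 1 := by omega
      simp
    · calc (n : ℝ) * (w m ^ 2) ^ (n - 1) ≤ n * w m ^ 2 := by
            gcongr
            exact pow_le_of_le_one (by positivity) (pow_le_one₀ hw0.le hw1) (by omega)
        _ ≤ 1 := hn1
  · rw [blockPowSum_PI_sum_indicator_cellBlock hq hI]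
    calc _ ≤ ∑ k : Fin n, ((if Iᶜ = {k} then 1 else 0) + ENNReal.ofReal D) :=
          Finset.sum_le_sum fun k _ => blockPowSum_PI_indicator_testVec_le hp hw hN hsD hND I k
      _ ≤ 1 + n * ENNReal.ofReal D := by
        rw [Finset.sum_add_distrib, Finset.sum_const, Finset.card_univ, Fintype.card_fin,
          nsmul_eq_mul, Finset.sum_boole]
        gcongr
        exact Nat.cast_le_one.2 <| Finset.card_le_one.2 fun k hk k' hk' =>
          Finset.singleton_injective ((Finset.mem_filter.1 hk).2.symm.trans
            (Finset.mem_filter.1 hk').2)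

theorem Ynorm_testVec_le (hp : 0 < p) (hw : IsWeight w) (hn : 0 < n) (hN : 0 < N)
    (hn1 : n * w m ^ 2 ≤ 1) (hsD : (w m ^ 2) ^ (p / 2) ≤ D)
    (hND : N * ((N * w m ^ 2)⁻¹) ^ (p / 2) ≤ D) :
    Ynorm p w n (testVec w n m N) ≤ (1 + n * ENNReal.ofReal D) ^ (1 / p) := by
  refine iSup₂_le ?_
  rintro _ ⟨I, rfl⟩
  rw [pwNorm_eq_blockPowSum]
  exact ENNReal.rpow_le_rpow (blockPowSum_PI_testVec_le hp hw hn hN hn1 hsD hND I)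
    (by positivity)

theorem exists_mem_envFam_cellBlock (w : ℕ → ℝ) (hn : 0 < n) (hN : 0 < N) :
    ∃ PW ∈ envFam (famYn w n), (∀ k : Fin n, (cellBlock m N k : Set (BIdx n)) ∈ PW.1) ∧
      ∀ k : Fin n, ∀ i ∈ cellBlock m N k, PW.2 i = w m := by
  set A : Fin n → Set (BIdx n) := fun k => cellBlock m N k
  have hAinj : Function.Injective A := cellBlock_injective hN
  have hout : (fun _ => (m + 1, 0) : BIdx n) ∈ (⋃ k, A k)ᶜ := by
    simp only [Set.mem_compl_iff, Set.mem_iUnion, not_exists]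
    exact fun k h => by simpa using fst_of_mem_cellBlock (Finset.mem_coe.1 h) ⟨0, hn⟩
  set Q := insert (⋃ k, A k)ᶜ (Set.range A)
  have hQ : IsPartition Q := isPartition_insert_compl_iUnion (pairwise_disjoint_cellBlock m N)
    (fun k => ⟨_, cell_mem_cellBlock hN k⟩) ⟨_, hout⟩
  have : Nonempty (Fin n) := ⟨⟨0, hn⟩⟩
  set T : Set (BIdx n) → PWPair (BIdx n) := fun q =>
    (PI {Function.invFun A q}ᶜ, WI w {Function.invFun A q}ᶜ)
  have hT : ∀ k, T (A k) = (PI {k}ᶜ, WI w {k}ᶜ) := fun k => by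
    simp only [T, Function.leftInverse_invFun hAinj k]
  have hAQ : ∀ k, A k ∈ Q := fun k => Set.mem_insert_of_mem _ ⟨k, rfl⟩
  have hAP : ∀ k, A k ∈ envPartition Q T := fun k => by
    refine ⟨⟨_, cell_mem_cellBlock hN k⟩, A k, hAQ k,
      {i | ∀ j ∈ ({k}ᶜ : Finset (Fin n)), i j = cell m k 0 j}, ?_, ?_⟩
    · rw [hT k]
      exact ⟨cell m k 0, rfl⟩
    · exact (Set.inter_eq_left.2 (cellBlock_subset_of_notMem (by simp))).symm
  have hW : ∀ k, ∀ i ∈ cellBlock m N k, envWeight Q T i = w m := fun k i hi => by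
    rw [envWeight, blockOf_eq hQ.2.1 (hAQ k) hi, hT k]
    simp [WI_of_mem_cellBlock w _ hi]
  exact ⟨_, ⟨Q, T, hQ, fun _ _ => ⟨_, rfl⟩, rfl⟩, hAP, hW⟩

theorem le_envNorm_testVec (hp : 0 < p) (hw : IsWeight w) (hn : 0 < n) (hN : 0 < N) :
    (n : ℝ≥0∞) ^ (1 / p) ≤ envNorm p (famYn w n) (testVec w n m N) := by
  obtain ⟨PW, hPW, hA, hW⟩ := exists_mem_envFam_cellBlock (m := m) w hn hN
  have hblock : ∀ k : Fin n, ∑' j : (cellBlock m N k : Set (BIdx n)),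
      ENNReal.ofReal (testVec w n m N j ^ 2 * PW.2 j ^ 2) = 1 := by
    intro k
    rw [Finset.tsum_subtype' (cellBlock m N k) fun j =>
        ENNReal.ofReal (testVec w n m N j ^ 2 * PW.2 j ^ 2),
      Finset.sum_congr rfl fun i hi => by
        rw [testVec_of_mem w hi, hW k i hi, Real.sq_sqrt (by have := (hw m).1; positivity)],
      Finset.sum_const, card_cellBlock, nsmul_eq_mul]
    simpa using natCast_mul_ofReal_inv_mul_pow_sq hN (hw m).1.ne' (le_refl 1)
  calc (n : ℝ≥0∞) ^ (1 / p)
      = (∑ k : Fin n, (∑' j : (cellBlock m N k : Set (BIdx n)),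
          ENNReal.ofReal (testVec w n m N j ^ 2 * PW.2 j ^ 2)) ^ (p / 2)) ^ (1 / p) := by
        simp only [hblock, ENNReal.one_rpow, Finset.sum_const, Finset.card_univ,
          Fintype.card_fin, nsmul_eq_mul, mul_one]
    _ ≤ pwNorm p PW.1 PW.2 (testVec w n m N) := by
        rw [pwNorm_eq_blockPowSum]
        exact ENNReal.rpow_le_rpow (sum_le_blockPowSum (cellBlock_injective hN) hA _)
          (by positivity)
    _ ≤ envNorm p (famYn w n) (testVec w n m N) :=
        le_iSup₂ (f := fun PW (_ : PW ∈ envFam (famYn w n)) => pwNorm p PW.1 PW.2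
          (testVec w n m N)) PW hPW

end Estimates

theorem exists_testVec_params {w : ℕ → ℝ} (hw : IsWeight w) (hw0 : Tendsto w atTop (𝓝 0))
    (n : ℕ) {q : ℝ} (hq : 1 < q) {D : ℝ} (hD : 0 < D) :
    ∃ m N : ℕ, 0 < N ∧ n * w m ^ 2 ≤ 1 ∧ (w m ^ 2) ^ q ≤ D ∧
      N * ((N * w m ^ 2)⁻¹) ^ q ≤ D := by
  have hs : Tendsto (fun m => w m ^ 2) atTop (𝓝 0) := by simpa using hw0.pow 2
  have h1 : ∀ᶠ m in atTop, n * w m ^ 2 ≤ 1 := by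
    have := hs.const_mul (n : ℝ)
    rw [mul_zero] at this
    exact this.eventually (ge_mem_nhds one_pos)
  have h2 : ∀ᶠ m in atTop, (w m ^ 2) ^ q ≤ D := by
    have := hs.rpow_const (p := q) (Or.inr (by linarith))
    rw [Real.zero_rpow (by linarith)] at this
    exact this.eventually (ge_mem_nhds hD)
  obtain ⟨m, hm1, hm2⟩ := (h1.and h2).exists
  have hs0 : 0 < w m ^ 2 := pow_pos (hw m).1 2
  -- `N (N s)^{-q} = s^{-q} N^{-(q-1)} → 0` since `q > 1`
  have h3 : Tendsto (fun N : ℕ => (N : ℝ) * ((N * w m ^ 2)⁻¹) ^ q) atTop (𝓝 0) := by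
    have := ((tendsto_rpow_neg_atTop (sub_pos.2 hq)).comp
      tendsto_natCast_atTop_atTop).const_mul ((w m ^ 2) ^ q)⁻¹
    rw [mul_zero] at this
    refine this.congr' ((eventually_gt_atTop 0).mono fun N hN => ?_)
    have hN' : (0 : ℝ) < N := by exact_mod_cast hN
    simp only [Function.comp]
    rw [Real.inv_rpow (by positivity), Real.mul_rpow hN'.le hs0.le, Real.rpow_neg hN'.le,
      Real.rpow_sub_one hN'.ne']
    field_simp
  obtain ⟨N, hN1, hN2⟩ := ((h3.eventually (ge_mem_nhds hD)).and (eventually_gt_atTop 0)).exists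
  exact ⟨m, N, hN2, hm1, hm2, hN1⟩

theorem rpow_le_iSup_div_mul {p : ℝ} (hp : 2 < p) {w : ℕ → ℝ} (hw : IsWeight w)
    (hw0 : Tendsto w atTop (𝓝 0)) {n : ℕ} (hn : 0 < n) {D : ℝ} (hD : 0 < D) :
    (n : ℝ≥0∞) ^ (1 / p) ≤
      (⨆ (x : BIdx n → ℝ) (_ : x ≠ 0) (_ : Ynorm p w n x < ⊤),
        envNorm p (famYn w n) x / Ynorm p w n x) * (1 + n * ENNReal.ofReal D) ^ (1 / p) := by
  obtain ⟨m, N, hN, hn1, hsD, hND⟩ :=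
    exists_testVec_params hw hw0 n (by linarith : 1 < p / 2) hD
  have hY := Ynorm_testVec_le (by linarith) hw hn hN hn1 hsD hND
  have hB0 : (1 + n * ENNReal.ofReal D) ^ (1 / p) ≠ 0 := by positivity
  have hBtop : (1 + n * ENNReal.ofReal D) ^ (1 / p) ≠ ⊤ :=
    ENNReal.rpow_ne_top_of_nonneg (by positivity) (by simp [ENNReal.mul_eq_top])
  rw [← ENNReal.div_le_iff hB0 hBtop]
  calc _ ≤ envNorm p (famYn w n) (testVec w n m N) / Ynorm p w n (testVec w n m N) :=
        ENNReal.div_le_div (le_envNorm_testVec (by linarith) hw hn hN) hY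
    _ ≤ _ := by
      refine le_iSup₂_of_le (testVec w n m N) (testVec_ne_zero hw hn hN) ?_
      exact le_iSup_of_le (hY.trans_lt hBtop.lt_top) le_rfl

/-- For each `n`, the ratio of the envelope norm generated by
`{(P_I, W_I) : I ⊆ {1,…,n}}` to the `Y_n`-norm has supremum at least `n^{1/p}` over
nonzero elements of `Y_n`. -/
theorem statement17 (p : ℝ) (hp : 2 < p) (w : ℕ → ℝ) (hw : IsWeight w)
    (hw0 : Filter.Tendsto w Filter.atTop (nhds 0)) (n : ℕ) :
    (n : ℝ≥0∞) ^ ((1 : ℝ) / p) ≤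
      ⨆ (x : BIdx n → ℝ) (_ : x ≠ 0) (_ : Ynorm p w n x < ⊤),
        envNorm p (famYn w n) x / Ynorm p w n x := by
  rcases Nat.eq_zero_or_pos n with rfl | hn
  · rw [Nat.cast_zero, ENNReal.zero_rpow_of_pos (one_div_pos.2 (by linarith))]
    exact zero_le
  set R := ⨆ (x : BIdx n → ℝ) (_ : x ≠ 0) (_ : Ynorm p w n x < ⊤),
    envNorm p (famYn w n) x / Ynorm p w n x
  have hc : Continuous fun D : ℝ => (1 + n * ENNReal.ofReal D) ^ (1 / p) :=
    ENNReal.continuous_rpow_const.comp (continuous_const.add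
      ((ENNReal.continuous_const_mul (ENNReal.natCast_ne_top n)).comp
        ENNReal.continuous_ofReal))
  have hlim :
      Tendsto (fun D : ℝ => R * (1 + n * ENNReal.ofReal D) ^ (1 / p)) (𝓝[>] 0) (𝓝 R) := by
    have h1 : Tendsto (fun D : ℝ => (1 + n * ENNReal.ofReal D) ^ (1 / p)) (𝓝[>] 0) (𝓝 1) := by
      simpa using (hc.tendsto 0).mono_left nhdsWithin_le_nhds
    simpa using ENNReal.Tendsto.const_mul h1 (Or.inl one_ne_zero)
  exact ge_of_tendsto hlim (eventually_nhdsWithin_of_forall fun D hD =>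
    rpow_le_iSup_div_mul hp hw hw0 hn hD)
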